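/- arXiv:1110.1110 — 4 statements merged into one kernel-verified Lean document; each statement's English description precedes it below -/
import Mathlib

section
/- The probabilities p_j(\lambda, m) = ((m \wedge j)! / (m \vee j)!) \lambda^{|m-j|} e^{-\lambda} (L_{m \wedge j}^{(|m-j|)}(\lambda))^2, for j = 0, 1, 2, ..., sum to 1 for every \lambda > 0 and every nonnegative integer m. -/
/-- The generalized Laguerre polynomial
`L_k^{(α)}(x) = ∑_{i=0}^k (k+α choose k-i) (-x)^i / i!` (nonnegative integer
parameter `α`). -/
noncomputable def lag (k α : ℕ) (x : ℝ) : ℝ :=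
  ∑ i ∈ Finset.range (k + 1),
    ((k + α).choose (k - i) : ℝ) * (-x) ^ i / (Nat.factorial i : ℝ)

/-- The photon-counting probabilities
`p_j(λ,m) = ((m∧j)!/(m∨j)!) λ^{|m-j|} e^{-λ} (L_{m∧j}^{(|m-j|)}(λ))²`. -/
noncomputable def pgen (lam : ℝ) (m j : ℕ) : ℝ :=
  ((Nat.factorial (min m j) : ℝ) / (Nat.factorial (max m j) : ℝ)) *
    lam ^ (max m j - min m j) * Real.exp (-lam) *
    (lag (min m j) (max m j - min m j) lam) ^ 2

/-!
Expanding the square of the Laguerre polynomial writes `e^λ p_j(λ, m)` as a double sum over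
`q, q' ≤ m` of monomials in `λ`; for `j < m` this follows from the case `m ≤ j` by the symmetry
`p_j(λ, m) = p_m(λ, j)`. Regrouping these monomials by their power `λ^n`, the coefficient of
`λ^n / n!` is `∑ (-1)^(q+q') C(n,q) C(m,q') C(m+n-q-q', m-q)`. For fixed `q` the sum over `q'` is
the coefficient of `X^(m-q)` in `X^m (X+1)^(n-q)`, so only `q = 0` contributes and the
coefficient is `1`. Hence `∑_j e^λ p_j = ∑_n λ^n / n! = e^λ`.
-/

open Finset Polynomial Nat

section Combinatorics

variable {R : Type*} [CommRing R]

theorem sum_neg_one_pow_mul_choose_mul_X_add_one_pow {M A : ℕ} (hMA : M ≤ A) :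
    ∑ t ∈ range (M + 1), C ((-1 : R) ^ t * M.choose t) * (X + 1) ^ (A - t) =
      X ^ M * (X + 1) ^ (A - M) := by
  have hX : (X : R[X]) ^ M = (-1 + (X + 1)) ^ M := by ring
  rw [hX, add_pow, sum_mul]
  refine sum_congr rfl fun t ht => ?_
  have htM : t ≤ M := mem_range_succ_iff.1 ht
  rw [show A - t = (M - t) + (A - M) by omega, pow_add]
  simp only [C_mul, C_pow, C_neg, C_1, map_natCast]
  ring

theorem sum_neg_one_pow_mul_choose_mul_choose_sub {M A : ℕ} (hMA : M ≤ A) (B : ℕ) :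
    ∑ t ∈ range (M + 1), (-1 : R) ^ t * M.choose t * (A - t).choose B =
      if M ≤ B then ((A - M).choose (B - M) : R) else 0 := by
  have h := congrArg (coeff · B) (sum_neg_one_pow_mul_choose_mul_X_add_one_pow (R := R) hMA)
  simpa only [finsetSum_coeff, coeff_C_mul, coeff_X_add_one_pow, coeff_X_pow_mul'] using h

theorem sum_sum_neg_one_pow_mul_choose_mul_choose_mul_choose (m n : ℕ) :
    ∑ q ∈ range (m + 1), ∑ q' ∈ range (m + 1),
      (-1 : R) ^ (q + q') * n.choose q * m.choose q' * (m + n - q - q').choose (m - q) = 1 := by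
  have inner : ∀ q ∈ range (m + 1), ∑ q' ∈ range (m + 1),
      (-1 : R) ^ (q + q') * n.choose q * m.choose q' * (m + n - q - q').choose (m - q) =
        if q = 0 then 1 else 0 := by
    intro q hq
    have hqm : q ≤ m := mem_range_succ_iff.1 hq
    have hfactor : ∀ q', (-1 : R) ^ (q + q') * n.choose q * m.choose q' *
        (m + n - q - q').choose (m - q) =
          (-1) ^ q * n.choose q * ((-1) ^ q' * m.choose q' * (m + n - q - q').choose (m - q)) :=
      fun q' => by ring
    simp only [hfactor, ← mul_sum]
    rcases le_or_gt q n with hqn | hnq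
    · rw [sum_neg_one_pow_mul_choose_mul_choose_sub (by omega : m ≤ m + n - q)]
      rcases eq_or_ne q 0 with rfl | hq0
      · simp
      · simp [hq0, show ¬ m ≤ m - q by omega]
    · simp [Nat.choose_eq_zero_of_lt hnq, show q ≠ 0 by omega]
  rw [sum_congr rfl inner, sum_ite_eq']
  simp

end Combinatorics

theorem Finset.sum_range_add_of_eq_zero {M : Type*} [AddCommMonoid M] {f : ℕ → M} {c : ℕ}
    (hf : ∀ i < c, f i = 0) (n : ℕ) :
    ∑ i ∈ range (c + n), f i = ∑ i ∈ range n, f (c + i) := by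
  rw [sum_range_add, sum_eq_zero fun i hi => hf i (mem_range.1 hi), zero_add]

theorem hasSum_nat_add_iff_of_eq_zero {G : Type*} [AddCommGroup G] [TopologicalSpace G]
    [IsTopologicalAddGroup G] {f : ℕ → G} {c : ℕ} (hf : ∀ i < c, f i = 0) {a : G} :
    HasSum (fun n => f (n + c)) a ↔ HasSum f a := by
  rw [hasSum_nat_add_iff, sum_eq_zero fun i hi => hf i (mem_range.1 hi), add_zero]

theorem lag_eq_sum {k N : ℕ} (h : k ≤ N) (x : ℝ) :
    lag k (N - k) x = ∑ i ∈ range (k + 1), (N.choose (k - i) : ℝ) * (-x) ^ i / i ! := by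
  rw [lag, Nat.add_sub_cancel' h]

theorem factorial_div_factorial_mul_lag {k N : ℕ} (h : k ≤ N) (x : ℝ) :
    (k ! / N ! : ℝ) * lag k (N - k) x =
      ∑ i ∈ range (k + 1), (k.choose i : ℝ) * (-x) ^ i / (N - k + i)! := by
  rw [lag_eq_sum h, mul_sum]
  refine sum_congr rfl fun i hi => ?_
  have hik : i ≤ k := mem_range_succ_iff.1 hi
  rw [Nat.cast_choose ℝ (by omega : k - i ≤ N), Nat.cast_choose ℝ hik,
    show N - (k - i) = N - k + i by omega]
  field_simp

theorem pgen_comm (lam : ℝ) (m j : ℕ) : pgen lam m j = pgen lam j m := by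
  simp only [pgen, min_comm, max_comm]

-- The `(q, q')` term of `e^λ p_j(λ, m)` once the square of the Laguerre polynomial is multiplied
-- out; the guard keeps the exponent of `λ` and the factorial from truncating.
noncomputable def pgenSummand (lam : ℝ) (m j q q' : ℕ) : ℝ :=
  if m ≤ j + q ∧ m ≤ j + q' then
    (-1) ^ (q + q') * j.choose (m - q) * m.choose q' * lam ^ (j + q + q' - m) /
      (q ! * (j + q' - m)!)
  else 0

theorem exp_mul_pgen_of_le {m j : ℕ} (h : m ≤ j) (lam : ℝ) :
    Real.exp lam * pgen lam m j =
      ∑ q ∈ range (m + 1), ∑ q' ∈ range (m + 1), pgenSummand lam m j q q' := by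
  have hsplit : Real.exp lam * pgen lam m j =
      lam ^ (j - m) * lag m (j - m) lam * ((m ! / j ! : ℝ) * lag m (j - m) lam) := by
    rw [pgen, min_eq_left h, max_eq_right h, Real.exp_neg]
    field_simp
  rw [hsplit, factorial_div_factorial_mul_lag h, lag_eq_sum h, mul_assoc, sum_mul_sum, mul_sum]
  refine sum_congr rfl fun q hq => ?_
  rw [mul_sum]
  refine sum_congr rfl fun q' hq' => ?_
  simp only [mem_range] at hq hq'
  rw [pgenSummand, if_pos ⟨by omega, by omega⟩, show j + q + q' - m = j - m + q + q' by omega,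
    show j - m + q' = j + q' - m by omega, pow_add, pow_add, neg_pow, neg_pow lam q']
  field_simp
  ring

theorem pgenSummand_shift_eq {m j a b : ℕ} (hjm : j ≤ m) (ha : a ≤ j) (hb : b ≤ j)
    (lam : ℝ) :
    pgenSummand lam m j (m - j + a) (m - j + b) = pgenSummand lam j m b a := by
  rw [pgenSummand, pgenSummand, if_pos ⟨by omega, by omega⟩, if_pos ⟨by omega, by omega⟩,
    show m - (m - j + a) = j - a by omega, Nat.choose_symm ha,
    ← Nat.choose_symm (show j - b ≤ m by omega), show m - (j - b) = m - j + b by omega,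
    show j + (m - j + a) + (m - j + b) - m = m + b + a - j by omega,
    show j + (m - j + b) - m = b by omega, show m + a - j = m - j + a by omega,
    show m - j + a + (m - j + b) = b + a + 2 * (m - j) by omega,
    pow_add, pow_mul]
  norm_num
  ring

theorem pgenSummand_eq_zero {m j q q' : ℕ} (h : j + q < m ∨ j + q' < m) (lam : ℝ) :
    pgenSummand lam m j q q' = 0 :=
  if_neg (by omega)

theorem exp_mul_pgen (lam : ℝ) (m j : ℕ) :
    Real.exp lam * pgen lam m j =
      ∑ q ∈ range (m + 1), ∑ q' ∈ range (m + 1), pgenSummand lam m j q q' := by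
  rcases le_total m j with h | h
  · exact exp_mul_pgen_of_le h lam
  have hm : m + 1 = m - j + (j + 1) := by omega
  rw [pgen_comm, exp_mul_pgen_of_le h, hm, sum_range_add_of_eq_zero (c := m - j)
    (fun q hq => sum_eq_zero fun q' _ => pgenSummand_eq_zero (by omega) lam), sum_comm]
  refine sum_congr rfl fun a ha => ?_
  rw [sum_range_add_of_eq_zero (c := m - j) fun q' hq' => pgenSummand_eq_zero (by omega) lam]
  exact sum_congr rfl fun b hb => (pgenSummand_shift_eq h (mem_range_succ_iff.1 ha)
    (mem_range_succ_iff.1 hb) lam).symm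

-- `pgenSummand lam m j q q'` re-indexed by its power `n = j + q + q' - m` of `λ`.
noncomputable def expSummand (lam : ℝ) (m n q q' : ℕ) : ℝ :=
  (-1) ^ (q + q') * n.choose q * m.choose q' * (m + n - q - q').choose (m - q) * lam ^ n / n !

theorem sum_sum_expSummand (lam : ℝ) (m n : ℕ) :
    ∑ q ∈ range (m + 1), ∑ q' ∈ range (m + 1), expSummand lam m n q q' = lam ^ n / n ! := by
  simp only [expSummand, ← sum_div, ← sum_mul,
    sum_sum_neg_one_pow_mul_choose_mul_choose_mul_choose, one_mul]

theorem pgenSummand_eq_expSummand {m j q q' : ℕ} (h : m ≤ j + q + q') (lam : ℝ) :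
    pgenSummand lam m j q q' = expSummand lam m (j + q + q' - m) q q' := by
  obtain ⟨n, hn⟩ : ∃ n, j + q + q' - m = n := ⟨_, rfl⟩
  rw [pgenSummand, expSummand, hn, show m + n - q - q' = j by omega]
  split_ifs with hsupp
  · rw [Nat.cast_choose ℝ (show q ≤ n by omega), show j + q' - m = n - q by omega]
    field_simp
  · rcases not_and_or.1 hsupp with hjq | hjq'
    · simp [Nat.choose_eq_zero_of_lt (show j < m - q by omega)]
    · simp [Nat.choose_eq_zero_of_lt (show n < q by omega)]

theorem hasSum_pgenSummand_iff {m q q' : ℕ} (hq' : q' ≤ m) (lam : ℝ) {a : ℝ} :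
    HasSum (fun j => pgenSummand lam m j q q') a ↔
      HasSum (fun n => expSummand lam m n q q') a := by
  rcases le_total m (q + q') with h | h
  · have hshift : (fun j => pgenSummand lam m j q q') =
        fun j => expSummand lam m (j + (q + q' - m)) q q' := by
      ext j
      rw [pgenSummand_eq_expSummand (by omega), show j + q + q' - m = j + (q + q' - m) by omega]
    rw [hshift, hasSum_nat_add_iff_of_eq_zero (f := fun n => expSummand lam m n q q')]
    intro n hn
    simp [expSummand, Nat.choose_eq_zero_of_lt (show n < q by omega)]
  · have hshift : (fun n => expSummand lam m n q q') =
        fun n => pgenSummand lam m (n + (m - q - q')) q q' := by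
      ext n
      rw [pgenSummand_eq_expSummand (by omega), show n + (m - q - q') + q + q' - m = n by omega]
    rw [hshift, hasSum_nat_add_iff_of_eq_zero (f := fun j => pgenSummand lam m j q q')]
    exact fun j hj => pgenSummand_eq_zero (by omega) lam

theorem norm_expSummand_le (lam : ℝ) (m n q q' : ℕ) :
    ‖expSummand lam m n q q'‖ ≤ 4 ^ m * ((4 * |lam|) ^ n / n !) := by
  have hchoose :
      (n.choose q * m.choose q' * (m + n - q - q').choose (m - q) : ℝ) ≤ 4 ^ m * 4 ^ n := by
    have h : n.choose q * m.choose q' * (m + n - q - q').choose (m - q) ≤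
        2 ^ n * 2 ^ m * 2 ^ (m + n) :=
      Nat.mul_le_mul (Nat.mul_le_mul (Nat.choose_le_two_pow _ _) (Nat.choose_le_two_pow _ _))
        ((Nat.choose_le_two_pow _ _).trans (Nat.pow_le_pow_right two_pos (by omega)))
    calc (n.choose q * m.choose q' * (m + n - q - q').choose (m - q) : ℝ)
        ≤ 2 ^ n * 2 ^ m * 2 ^ (m + n) := by exact_mod_cast h
      _ = 4 ^ m * 4 ^ n := by
        rw [show (4 : ℝ) = 2 ^ 2 by norm_num, ← pow_mul, ← pow_mul, pow_add]
        ring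
  calc ‖expSummand lam m n q q'‖
      = (n.choose q * m.choose q' * (m + n - q - q').choose (m - q) : ℝ) * (|lam| ^ n / n !) := by
        simp only [expSummand, norm_div, norm_mul, norm_pow, norm_neg, norm_one, one_pow, one_mul,
          RCLike.norm_natCast, Real.norm_eq_abs]
        ring
    _ ≤ 4 ^ m * 4 ^ n * (|lam| ^ n / n !) := by gcongr
    _ = 4 ^ m * ((4 * |lam|) ^ n / n !) := by ring

theorem summable_expSummand (lam : ℝ) (m q q' : ℕ) :
    Summable (fun n => expSummand lam m n q q') := by
  refine Summable.of_norm_bounded ?_ (norm_expSummand_le lam m · q q')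
  exact (Real.summable_pow_div_factorial (4 * |lam|)).mul_left (4 ^ m)

theorem hasSum_exp_mul_pgen (lam : ℝ) (m : ℕ) :
    HasSum (fun j => Real.exp lam * pgen lam m j) (Real.exp lam) := by
  set S : ℕ → ℕ → ℝ := fun q q' => ∑' n, expSummand lam m n q q'
  have hexp : ∀ q q', HasSum (fun n => expSummand lam m n q q') (S q q') :=
    fun q q' => (summable_expSummand lam m q q').hasSum
  have hS : ∑ q ∈ range (m + 1), ∑ q' ∈ range (m + 1), S q q' = Real.exp lam := by
    refine (hasSum_sum fun q _ => hasSum_sum fun q' _ => hexp q q').unique ?_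
    simp only [sum_sum_expSummand, Real.exp_eq_exp_ℝ]
    exact NormedSpace.expSeries_div_hasSum_exp lam
  rw [funext (exp_mul_pgen lam m), ← hS]
  exact hasSum_sum fun q _ => hasSum_sum fun q' hq' =>
    (hasSum_pgenSummand_iff (mem_range_succ_iff.1 hq') lam).2 (hexp q q')

theorem pgen_tsum_eq_one_general (lam : ℝ) (m : ℕ) :
    ∑' j : ℕ, pgen lam m j = 1 := by
  have h := (hasSum_exp_mul_pgen lam m).mul_left (Real.exp (-lam))
  simp only [← mul_assoc, ← Real.exp_add, neg_add_cancel, Real.exp_zero, one_mul] at h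
  exact h.tsum_eq

/-- The probabilities `p_j(λ,m)` sum to `1` for every `λ > 0` and every
nonnegative integer `m`. -/
theorem pgen_tsum_eq_one (lam : ℝ) (hlam : 0 < lam) (m : ℕ) :
    ∑' j : ℕ, pgen lam m j = 1 :=
  pgen_tsum_eq_one_general lam m
end

section
/- The characteristic function of the generalized Poisson distribution \mathcal{P}(\lambda, m), namely \varphi(u) = \sum_{j=0}^\infty e^{iju} p_j(\lambda, m), equals \exp(\lambda(e^{iu}-1)) e^{imu} L_m(2\lambda(1-\cos u)) for all real u. -/
/-!
Write `λ = c²` with `c ∈ ℂ` and let `aₘ(j)` be the Taylor coefficients of `e^{cz} (z - c)ᵐ`;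
expanding the binomial gives `p_j = e^{-λ} (j!/m!) aₘ(j)²`. Consider the pairing
`S(n, m) = ∑ⱼ j! tʲ aₙ(j) aₘ(j)`. Multiplying by `z - c` shifts `aₘ(j)` to `aₘ(j - 1)`, which
the weight `j!` transfers to `aₙ` as the derivative `(j + 1) aₙ(j + 1)`; as
`(e^{cz} (z - c)ⁿ)' = c e^{cz} (z - c)ⁿ + n e^{cz} (z - c)ⁿ⁻¹`, this gives
`S(n, m + 1) = (tc - c) S(n, m) + t n S(n - 1, m)`, with `S(n, 0) = e^{tc²} (tc - c)ⁿ`.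
The same recursion holds for `n! m!` times the coefficient of `xⁿ yᵐ` in
`e^{tc²} exp ((tc - c)(x + y) + t x y)`, which therefore equals `S(n, m)`. At `t = e^{iu}` one has
`λ (t - 1)² = -2λ t (1 - cos u)`, and the diagonal coefficient becomes `m! tᵐ Lₘ(2λ(1 - cos u))`.
-/

open Finset Nat PowerSeries

section ExpBilinCoeff

variable {R : Type*} [CommRing R]

/-- `n! m!` times the coefficient of `xⁿ yᵐ` in `exp (a x + b y + t x y)`. -/
noncomputable def expBilinCoeff (a b t : R) (n m : ℕ) : R :=
  ∑ k ∈ range (m + 1), (n.choose k * m.choose k * k ! : R) * a ^ (n - k) * b ^ (m - k) * t ^ k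

theorem expBilinCoeff_eq_sum_range {m N : ℕ} (hmN : m ≤ N) (a b t : R) (n : ℕ) :
    expBilinCoeff a b t n m = ∑ k ∈ range (N + 1),
      (n.choose k * m.choose k * k ! : R) * a ^ (n - k) * b ^ (m - k) * t ^ k := by
  refine sum_subset (range_subset_range.2 (by omega)) fun k _ hk => ?_
  rw [choose_eq_zero_of_lt (n := m) (by simp at hk; omega)]
  simp

theorem expBilinCoeff_succ_right (a b t : R) (n m : ℕ) :
    expBilinCoeff a b t n (m + 1) =
      b * expBilinCoeff a b t n m + t * n * expBilinCoeff a b t (n - 1) m := by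
  have hfall : ∀ k, (n.choose (k + 1) * (k + 1)! : R) = n * ((n - 1).choose k * k !) := by
    intro k
    cases n with
    | zero => simp
    | succ n =>
      rw [factorial_succ, add_tsub_cancel_right]
      norm_cast
      rw [← mul_assoc, ← add_one_mul_choose_eq, mul_assoc]
  rw [expBilinCoeff_eq_sum_range (le_succ m) a b t n, expBilinCoeff, expBilinCoeff,
    sum_range_succ' _ (m + 1), sum_range_succ' _ (m + 1), mul_add, mul_sum, mul_sum,
    add_right_comm, ← sum_add_distrib]
  congr 1
  · refine sum_congr rfl fun k hk => ?_
    rw [choose_succ_succ' m, show n - 1 - k = n - (k + 1) by omega]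
    rcases (Nat.lt_succ_iff.1 (mem_range.1 hk)).lt_or_eq with hkm | rfl
    · rw [show m + 1 - (k + 1) = (m - (k + 1)) + 1 by omega,
        show m - k = (m - (k + 1)) + 1 by omega]
      push_cast
      linear_combination
        (m.choose k * a ^ (n - (k + 1)) * b ^ (m - (k + 1)) * b * t ^ (k + 1)) * hfall k
    · rw [choose_succ_self, choose_self, Nat.sub_self, Nat.sub_self]
      push_cast
      linear_combination (a ^ (n - (k + 1)) * t ^ (k + 1)) * hfall k
  · simp [pow_succ]
    ring

theorem expBilinCoeff_comm (a b t : R) (n m : ℕ) :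
    expBilinCoeff a b t n m = expBilinCoeff b a t m n := by
  rw [expBilinCoeff_eq_sum_range (le_add_left m n), expBilinCoeff_eq_sum_range (le_add_right n m)]
  exact sum_congr rfl fun k _ => by ring

@[simp]
theorem expBilinCoeff_zero_right (a b t : R) (n : ℕ) : expBilinCoeff a b t n 0 = a ^ n := by
  simp [expBilinCoeff]

theorem expBilinCoeff_eq_pow_mul {n m : ℕ} (hmn : m ≤ n) (a b t : R) :
    expBilinCoeff a b t n m = a ^ (n - m) * expBilinCoeff 1 (a * b) t n m := by
  rw [expBilinCoeff, expBilinCoeff, mul_sum]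
  refine sum_congr rfl fun k hk => ?_
  rw [show n - k = (n - m) + (m - k) by simp at hk; omega]
  ring

theorem expBilinCoeff_one_mul_mul (s y t : R) (n m : ℕ) :
    expBilinCoeff 1 (s * y) (s * t) n m = s ^ m * expBilinCoeff 1 y t n m := by
  rw [expBilinCoeff, expBilinCoeff, mul_sum]
  refine sum_congr rfl fun k hk => ?_
  rw [← Nat.sub_add_cancel (mem_range_succ_iff.1 hk)]
  simp only [Nat.add_sub_cancel, pow_add, mul_pow]
  ring

theorem sq_expBilinCoeff_neg (c : R) (m j : ℕ) :
    expBilinCoeff c (-c) 1 j m ^ 2 =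
      (c ^ 2) ^ (max m j - min m j) * expBilinCoeff 1 (-c ^ 2) 1 (max m j) (min m j) ^ 2 := by
  rcases le_total m j with h | h
  · rw [max_eq_right h, min_eq_left h, expBilinCoeff_eq_pow_mul h, mul_neg, ← sq]
    ring
  · have hsign : ((-c) ^ (m - j)) ^ 2 = (c ^ 2) ^ (m - j) := by
      rw [← pow_mul, mul_comm, pow_mul, neg_sq]
    rw [max_eq_left h, min_eq_right h, expBilinCoeff_comm, expBilinCoeff_eq_pow_mul h, neg_mul,
      ← sq, mul_pow, hsign]

end ExpBilinCoeff

@[simp, norm_cast]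
theorem Complex.ofReal_expBilinCoeff (a b t : ℝ) (n m : ℕ) :
    ((expBilinCoeff a b t n m : ℝ) : ℂ) = expBilinCoeff (a : ℂ) b t n m := by
  simp [expBilinCoeff]

theorem factorial_mul_lag {k n : ℕ} (hkn : k ≤ n) (x : ℝ) :
    k ! * lag k (n - k) x = expBilinCoeff 1 (-x) 1 n k := by
  rw [lag, Nat.add_sub_cancel' hkn, mul_sum, expBilinCoeff, ← sum_range_reflect]
  refine sum_congr rfl fun r hr => ?_
  have hrk := mem_range_succ_iff.1 hr
  rw [show k + 1 - 1 - r = k - r by omega, Nat.sub_sub_self hrk,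
    ← choose_mul_factorial_mul_factorial hrk]
  push_cast
  field_simp
  ring

section ExpMulSubPow

variable {K : Type*} [Field K]

noncomputable def expMulSubPow (c : K) (n : ℕ) : K⟦X⟧ :=
  mk (fun j => c ^ j / j !) * (X - C c) ^ n

@[simp]
theorem coeff_expMulSubPow_zero (c : K) (j : ℕ) : coeff j (expMulSubPow c 0) = c ^ j / j ! := by
  simp [expMulSubPow]

theorem expMulSubPow_succ (c : K) (n : ℕ) :
    expMulSubPow c (n + 1) = expMulSubPow c n * X - C c * expMulSubPow c n := by
  rw [expMulSubPow, expMulSubPow, pow_succ]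
  ring

theorem derivative_expMulSubPow [CharZero K] (c : K) (n : ℕ) :
    d⁄dX K (expMulSubPow c n) = c • expMulSubPow c n + (n : K) • expMulSubPow c (n - 1) := by
  have hexp : d⁄dX K (mk fun j => c ^ j / j !) = C c * mk fun j => c ^ j / j ! := by
    ext j
    rw [coeff_derivative, coeff_C_mul, coeff_mk, coeff_mk, factorial_succ]
    push_cast
    field_simp
    ring
  rw [expMulSubPow, expMulSubPow, Derivation.leibniz, derivative_pow, hexp]
  simp only [map_sub, derivative_X, derivative_C, sub_zero, smul_eq_mul, smul_eq_C_mul, map_natCast]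
  ring

theorem factorial_mul_coeff_expMulSubPow [CharZero K] (c : K) (n j : ℕ) :
    j ! * coeff j (expMulSubPow c n) = expBilinCoeff c (-c) 1 j n := by
  rw [expMulSubPow, sub_eq_add_neg, ← map_neg, add_pow, mul_sum, map_sum, mul_sum,
    expBilinCoeff]
  refine sum_congr rfl fun r _ => ?_
  rw [← map_pow, ← map_natCast (C (R := K)), mul_assoc, ← map_mul, mul_comm (X ^ r),
    mul_left_comm, coeff_C_mul, coeff_mul_X_pow', coeff_mk]
  split_ifs with hrj
  · rw [← choose_mul_factorial_mul_factorial hrj]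
    push_cast
    field_simp [factorial_ne_zero]
    ring
  · simp [choose_eq_zero_of_lt (not_le.1 hrj)]

end ExpMulSubPow

theorem HasSum.coeff_mul_X_sub_C {R : Type*} [CommRing R] [TopologicalSpace R]
    [IsTopologicalRing R] {f : R⟦X⟧} {z s : R} (h : HasSum (fun j => coeff j f * z ^ j) s)
    (c : R) : HasSum (fun j => coeff j (f * (X - C c)) * z ^ j) (s * (z - c)) := by
  have hX : HasSum (fun j => coeff j (f * X) * z ^ j) (s * z) := by
    rw [← hasSum_nat_add_iff' 1]
    simpa [coeff_succ_mul_X, pow_succ, mul_assoc] using h.mul_right z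
  have hcoeff : ∀ j, coeff j (f * (X - C c)) = coeff j (f * X) - c * coeff j f := fun j => by
    rw [mul_sub, map_sub, mul_comm f (C c), coeff_C_mul]
  simp only [hcoeff, sub_mul, mul_assoc]
  rw [show s * (z - c) = s * z - c * s by ring]
  exact hX.sub (h.mul_left c)

theorem hasSum_coeff_expMulSubPow (c z : ℂ) (n : ℕ) :
    HasSum (fun j => coeff j (expMulSubPow c n) * z ^ j) (Complex.exp (c * z) * (z - c) ^ n) := by
  induction n with
  | zero =>
    simpa [Complex.exp_eq_exp_ℂ, mul_pow, div_mul_eq_mul_div] using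
      NormedSpace.expSeries_div_hasSum_exp (c * z)
  | succ n ih =>
    rw [expMulSubPow, pow_succ, ← mul_assoc, pow_succ, ← mul_assoc]
    exact ih.coeff_mul_X_sub_C c

theorem hasSum_factorial_mul_coeff_mul_coeff (c t : ℂ) (m n : ℕ) :
    HasSum (fun j => (j ! : ℂ) * t ^ j * coeff j (expMulSubPow c n) * coeff j (expMulSubPow c m))
      (Complex.exp (t * c ^ 2) * expBilinCoeff (c * (t - 1)) (c * (t - 1)) t n m) := by
  set P := expBilinCoeff (c * (t - 1)) (c * (t - 1)) t with hP
  induction m generalizing n with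
  | zero =>
    rw [hP, expBilinCoeff_zero_right, show t * c ^ 2 = c * (t * c) by ring,
      show c * (t - 1) = t * c - c by ring]
    refine (hasSum_coeff_expMulSubPow c (t * c) n).congr_fun fun j => ?_
    rw [coeff_expMulSubPow_zero, mul_pow]
    field_simp [factorial_ne_zero]
  | succ m ih =>
    set E := Complex.exp (t * c ^ 2)
    have hderiv : ∀ j : ℕ, (j + 1 : ℂ) * coeff (j + 1) (expMulSubPow c n) =
        c * coeff j (expMulSubPow c n) + n * coeff j (expMulSubPow c (n - 1)) := fun j => by
      rw [mul_comm, ← coeff_derivative, derivative_expMulSubPow, map_add, coeff_smul, coeff_smul,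
        smul_eq_mul, smul_eq_mul]
    have hX : HasSum
        (fun j => (j ! : ℂ) * t ^ j * coeff j (expMulSubPow c n) * coeff j (expMulSubPow c m * X))
        (t * c * (E * P n m) + t * n * (E * P (n - 1) m)) := by
      rw [← hasSum_nat_add_iff' 1]
      simp only [coeff_succ_mul_X, range_one, sum_singleton, coeff_zero_mul_X, mul_zero, sub_zero]
      refine (((ih n).mul_left (t * c)).add ((ih (n - 1)).mul_left (t * n))).congr_fun fun j => ?_
      rw [factorial_succ, pow_succ]
      push_cast
      linear_combination (j ! * t ^ j * t * coeff j (expMulSubPow c m)) * hderiv j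
    rw [show E * P n (m + 1) = t * c * (E * P n m) + t * n * (E * P (n - 1) m) - c * (E * P n m) by
      rw [hP, expBilinCoeff_succ_right]; ring]
    refine (hX.sub ((ih n).mul_left c)).congr_fun fun j => ?_
    rw [expMulSubPow_succ, map_sub, coeff_C_mul]
    ring

theorem ofReal_pgen_eq_coeff_sq {lam : ℝ} {c : ℂ} (hc : c ^ 2 = lam) (m j : ℕ) :
    (pgen lam m j : ℂ) = Complex.exp (-lam) * (j ! / m !) * coeff j (expMulSubPow c m) ^ 2 := by
  have hlag := congrArg ((↑) : ℝ → ℂ) (factorial_mul_lag (min_le_max (a := m) (b := j)) lam)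
  push_cast at hlag
  have hsq := sq_expBilinCoeff_neg c m j
  rw [← factorial_mul_coeff_expMulSubPow, hc, ← hlag] at hsq
  have hfac : ((min m j)! : ℂ) * (max m j)! = m ! * j ! := by
    rcases le_total m j with h | h <;> simp [h, mul_comm]
  calc (pgen lam m j : ℂ)
      = Complex.exp (-lam) * (lam ^ (max m j - min m j) *
          ((min m j)! * lag (min m j) (max m j - min m j) lam) ^ 2) /
          ((min m j)! * (max m j)!) := by
        rw [pgen]
        push_cast
        field_simp [factorial_ne_zero]
    _ = Complex.exp (-lam) * (j ! * coeff j (expMulSubPow c m)) ^ 2 / (m ! * j !) := by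
        rw [← hsq, hfac]
    _ = Complex.exp (-lam) * (j ! / m !) * coeff j (expMulSubPow c m) ^ 2 := by
        field_simp [factorial_ne_zero]

theorem hasSum_pow_mul_pgen (lam : ℝ) (m : ℕ) (t : ℂ) :
    HasSum (fun j => t ^ j * (pgen lam m j : ℂ))
      (Complex.exp (lam * (t - 1)) * expBilinCoeff 1 (lam * (t - 1) ^ 2) t m m / m !) := by
  obtain ⟨c, hc⟩ := IsAlgClosed.exists_pow_nat_eq (lam : ℂ) two_pos
  have hexp : Complex.exp (-lam) * Complex.exp (t * c ^ 2) = Complex.exp (lam * (t - 1)) := by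
    rw [← Complex.exp_add, hc]
    ring_nf
  have hd : c * (t - 1) * (c * (t - 1)) = lam * (t - 1) ^ 2 := by
    rw [← hc]
    ring
  have h := (hasSum_factorial_mul_coeff_mul_coeff c t m m).mul_left (Complex.exp (-lam) / m !)
  rw [expBilinCoeff_eq_pow_mul le_rfl, Nat.sub_self, pow_zero, one_mul, hd] at h
  rw [← hexp, show ∀ a b c : ℂ, a * b * c / m ! = a / m ! * (b * c) by intros; ring]
  refine h.congr_fun fun j => ?_
  rw [ofReal_pgen_eq_coeff_sq hc]
  ring

theorem exp_I_mul_sub_one_sq (u : ℝ) :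
    (Complex.exp (Complex.I * u) - 1) ^ 2 = Complex.exp (Complex.I * u) * (2 * Real.cos u - 2) := by
  have h : Complex.exp (Complex.I * u) * Complex.exp (-(Complex.I * u)) = 1 := by
    rw [← Complex.exp_add, add_neg_cancel, Complex.exp_zero]
  rw [Complex.ofReal_cos, Complex.cos, neg_mul, mul_comm (u : ℂ)]
  linear_combination -h

theorem pgen_charFun_general (lam : ℝ) (m : ℕ) (u : ℝ) :
    ∑' j : ℕ, Complex.exp (Complex.I * j * u) * (pgen lam m j : ℂ) =
      Complex.exp (lam * (Complex.exp (Complex.I * u) - 1)) *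
        Complex.exp (Complex.I * m * u) *
        (lag m 0 (2 * lam * (1 - Real.cos u)) : ℂ) := by
  set t := Complex.exp (Complex.I * u)
  set x := 2 * lam * (1 - Real.cos u)
  have hpow : ∀ j : ℕ, Complex.exp (Complex.I * j * u) = t ^ j := fun j => by
    rw [← Complex.exp_nat_mul]
    ring_nf
  have hsq : (lam : ℂ) * (t - 1) ^ 2 = t * -(x : ℂ) := by
    rw [exp_I_mul_sub_one_sq]
    push_cast [x]
    ring
  have hlag := congrArg ((↑) : ℝ → ℂ) (factorial_mul_lag (le_refl m) x)
  push_cast [Nat.sub_self] at hlag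
  have hscale := expBilinCoeff_one_mul_mul t (-(x : ℂ)) 1 m m
  simp only [hpow, (hasSum_pow_mul_pgen lam m t).tsum_eq, hsq, mul_one] at hscale ⊢
  rw [hscale, ← hlag]
  field_simp [factorial_ne_zero]

/-- The characteristic function of the generalized Poisson distribution
`𝒫(λ,m)` equals `exp(λ(e^{iu}-1)) e^{imu} L_m(2λ(1-cos u))`. -/
theorem pgen_charFun (lam : ℝ) (hlam : 0 < lam) (m : ℕ) (u : ℝ) :
    ∑' j : ℕ, Complex.exp (Complex.I * j * u) * (pgen lam m j : ℂ) =
      Complex.exp (lam * (Complex.exp (Complex.I * u) - 1)) *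
        Complex.exp (Complex.I * m * u) *
        (lag m 0 (2 * lam * (1 - Real.cos u)) : ℂ) :=
  pgen_charFun_general lam m u
end

section
/- A random variable with characteristic function that vanishes at some real point is not infinitely divisible. Consequently, if \lambda \geq x_k^{(m)}/4 for some root x_k^{(m)} of L_m, the generalized Poisson distribution \mathcal{P}(\lambda, m) is not infinitely divisible. -/
open MeasureTheory

/-- Convolution of two measures on `ℝ`. -/
noncomputable def mconv (μ ν : Measure ℝ) : Measure ℝ :=
  (μ.prod ν).map (fun p => p.1 + p.2)

/-- `n`-fold convolution power of a measure on `ℝ`. -/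
noncomputable def mconvPow (ν : Measure ℝ) : ℕ → Measure ℝ
  | 0 => Measure.dirac 0
  | n + 1 => mconv (mconvPow ν n) ν

/-- A probability measure is infinitely divisible if for every `n ≥ 1` it is
the `n`-fold convolution of some probability measure. -/
def InfDivisible (μ : Measure ℝ) : Prop :=
  ∀ n : ℕ, 0 < n → ∃ ν : Measure ℝ, IsProbabilityMeasure ν ∧ μ = mconvPow ν n

/-- The characteristic function of a measure on `ℝ`. -/
noncomputable def charF (μ : Measure ℝ) (t : ℝ) : ℂ :=
  ∫ x, Complex.exp (Complex.I * t * x) ∂μ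
/-!
If `μ = ν^{*n}`, then `|φ_μ|² = (|φ_ν|²)^n`. Comparing `1 - cos 2a ≤ 4 (1 - cos a)` under the
symmetrization `ν ∗ ν(-·)`, whose characteristic function is `|φ_ν|²`, gives
`1 - |φ_ν(2t)|² ≤ 4 (1 - |φ_ν(t)|²)`. So if `φ_μ(t) ≠ 0` and `φ_μ(2t) = 0`, then
`|φ_ν(t)|² ≤ 3/4` for every `n`, hence `|φ_μ(t)|² ≤ (3/4)^n → 0`, which is absurd. The zero set of
the characteristic function of an infinitely divisible law is therefore closed under halving, and
since `φ_μ` is continuous with `φ_μ(0) = 1`, it is empty. For `𝒫(λ, m)`, any root `x ≤ 4λ` of `L_m`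
is attained by `2λ(1 - cos u)` for some real `u`, where the characteristic function vanishes.
-/

open Complex ComplexConjugate

lemma one_sub_cos_two_mul_le (a : ℝ) : 1 - Real.cos (2 * a) ≤ 4 * (1 - Real.cos a) := by
  nlinarith [Real.cos_sq_le_one a, Real.cos_le_one a, Real.cos_two_mul a]

lemma re_charFun_eq_integral_cos (μ : Measure ℝ) [IsFiniteMeasure μ] (t : ℝ) :
    (charFun μ t).re = ∫ x, Real.cos (t * x) ∂μ := by
  have hint : Integrable (fun x : ℝ => exp (t * x * I)) μ :=
    (integrable_const (1 : ℝ)).mono (by fun_prop) (ae_of_all _ fun x => by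
      simp [← ofReal_mul, norm_exp_ofReal_mul_I])
  simpa [charFun_apply_real, ← ofReal_mul, exp_ofReal_mul_I_re] using (integral_re hint).symm

lemma integrable_cos_mul (μ : Measure ℝ) [IsFiniteMeasure μ] (t : ℝ) :
    Integrable (fun x => Real.cos (t * x)) μ :=
  (integrable_const (1 : ℝ)).mono (by fun_prop) (ae_of_all _ fun x => by
    simpa using Real.abs_cos_le_one (t * x))

lemma one_sub_re_charFun_two_mul_le (μ : Measure ℝ) [IsProbabilityMeasure μ] (t : ℝ) :
    1 - (charFun μ (2 * t)).re ≤ 4 * (1 - (charFun μ t).re) := by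
  have hint := integrable_cos_mul μ
  have key := integral_mono (f := fun x => 1 - Real.cos (2 * t * x))
    (g := fun x => 4 * (1 - Real.cos (t * x))) ((integrable_const 1).sub (hint (2 * t)))
    (((integrable_const 1).sub (hint t)).const_mul 4)
    fun x => by simpa [mul_assoc] using one_sub_cos_two_mul_le (t * x)
  rw [integral_sub (integrable_const 1) (hint _), integral_const_mul,
    integral_sub (integrable_const 1) (hint _)] at key
  simpa [re_charFun_eq_integral_cos] using key

lemma charFun_conv_map_neg (ν : Measure ℝ) [IsFiniteMeasure ν] (t : ℝ) :
    charFun (ν ∗ ν.map Neg.neg) t = normSq (charFun ν t) := by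
  have hneg : charFun (ν.map Neg.neg) t = conj (charFun ν t) := by
    simpa using charFun_map_mul (μ := ν) (-1) t
  rw [charFun_conv, hneg, mul_conj]

lemma one_sub_normSq_charFun_two_mul_le (ν : Measure ℝ) [IsProbabilityMeasure ν] (t : ℝ) :
    1 - normSq (charFun ν (2 * t)) ≤ 4 * (1 - normSq (charFun ν t)) := by
  have := Measure.isProbabilityMeasure_map (μ := ν) measurable_neg.aemeasurable
  simpa [charFun_conv_map_neg] using one_sub_re_charFun_two_mul_le (ν ∗ ν.map Neg.neg) t

lemma charF_eq_charFun (μ : Measure ℝ) : charF μ = charFun μ := by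
  ext t
  simp only [charF, charFun_apply_real, mul_comm I, mul_right_comm _ I]

lemma mconv_eq_conv (μ ν : Measure ℝ) : mconv μ ν = μ ∗ ν := rfl

instance isProbabilityMeasure_mconvPow (ν : Measure ℝ) [IsProbabilityMeasure ν] (n : ℕ) :
    IsProbabilityMeasure (mconvPow ν n) := by
  induction n with
  | zero => rw [mconvPow]; infer_instance
  | succ n ih => rw [mconvPow, mconv_eq_conv]; infer_instance

lemma charFun_mconvPow (ν : Measure ℝ) [IsProbabilityMeasure ν] (n : ℕ) (t : ℝ) :
    charFun (mconvPow ν n) t = charFun ν t ^ n := by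
  induction n with
  | zero => simp [mconvPow]
  | succ n ih => rw [mconvPow, mconv_eq_conv, charFun_conv, ih, pow_succ]

namespace InfDivisible

variable {μ : Measure ℝ}

lemma charFun_two_mul_ne_zero (hμ : InfDivisible μ) {t : ℝ} (ht : charFun μ t ≠ 0) :
    charFun μ (2 * t) ≠ 0 := by
  obtain ⟨n, hn⟩ := exists_pow_lt_of_lt_one (normSq_pos.mpr ht) (by norm_num : (3 / 4 : ℝ) < 1)
  obtain ⟨ν, hν, rfl⟩ := hμ (n + 1) n.succ_pos
  simp only [charFun_mconvPow, map_pow, ne_eq, pow_eq_zero_iff n.succ_ne_zero] at ht hn ⊢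
  intro h2t
  have hsmall : normSq (charFun ν t) ≤ 3 / 4 := by
    have := one_sub_normSq_charFun_two_mul_le ν t
    rw [h2t, map_zero] at this
    linarith
  have := pow_le_pow_left₀ (normSq_nonneg _) hsmall (n + 1)
  have := pow_le_pow_of_le_one (by norm_num : (0 : ℝ) ≤ 3 / 4) (by norm_num) (by omega : n ≤ n + 1)
  linarith

lemma charFun_two_pow_mul_ne_zero (hμ : InfDivisible μ) {t : ℝ} (ht : charFun μ t ≠ 0) (k : ℕ) :
    charFun μ (2 ^ k * t) ≠ 0 := by
  induction k with
  | zero => simpa using ht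
  | succ k ih => simpa [pow_succ, mul_comm, mul_left_comm] using hμ.charFun_two_mul_ne_zero ih

lemma charFun_ne_zero [IsProbabilityMeasure μ] (hμ : InfDivisible μ) (t : ℝ) :
    charFun μ t ≠ 0 := by
  have hnhds : {s | charFun μ s ≠ 0} ∈ nhds 0 :=
    (isOpen_ne_fun continuous_charFun continuous_const).mem_nhds (by simp)
  have hhalving : Filter.Tendsto (fun k : ℕ => t / 2 ^ k) Filter.atTop (nhds 0) := by
    simpa [div_eq_mul_inv] using
      (tendsto_pow_atTop_nhds_zero_of_lt_one (by norm_num : (0 : ℝ) ≤ 2⁻¹) (by norm_num)).const_mul t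
  obtain ⟨k, hk⟩ := (hhalving.eventually hnhds).exists
  simpa [mul_div_cancel₀] using hμ.charFun_two_pow_mul_ne_zero hk k

end InfDivisible

lemma exists_two_mul_mul_one_sub_cos_eq {lam x : ℝ} (hlam : 0 < lam) (hx : 0 ≤ x)
    (hxlam : x ≤ 4 * lam) : ∃ u : ℝ, 2 * lam * (1 - Real.cos u) = x := by
  refine ⟨Real.arccos (1 - x / (2 * lam)), ?_⟩
  rw [Real.cos_arccos (by rw [le_sub_comm, div_le_iff₀ (by positivity)]; linarith)
    (by linarith [div_nonneg hx (by positivity : (0 : ℝ) ≤ 2 * lam)])]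
  field_simp
  ring

/-- A probability law whose characteristic function vanishes somewhere is not
infinitely divisible; consequently, if `λ ≥ x/4` for some root `x` of `L_m`,
the generalized Poisson distribution `𝒫(λ,m)` (whose characteristic function is
`exp(λ(e^{iu}-1)) e^{imu} L_m(2λ(1-cos u))`) is not infinitely divisible. -/
theorem not_infDivisible_of_charFun_vanishes :
    (∀ μ : Measure ℝ, IsProbabilityMeasure μ → (∃ t : ℝ, charF μ t = 0) →
      ¬ InfDivisible μ) ∧
    (∀ (m : ℕ) (lam x : ℝ), 0 < lam → 0 < x → lag m 0 x = 0 → x / 4 ≤ lam →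
      ∀ μ : Measure ℝ, IsProbabilityMeasure μ →
        (∀ u : ℝ, charF μ u =
          Complex.exp (lam * (Complex.exp (Complex.I * u) - 1)) *
            Complex.exp (Complex.I * m * u) *
            (lag m 0 (2 * lam * (1 - Real.cos u)) : ℂ)) →
        ¬ InfDivisible μ) := by
  have vanishing : ∀ μ : Measure ℝ, IsProbabilityMeasure μ → (∃ t : ℝ, charF μ t = 0) →
      ¬ InfDivisible μ := by
    rintro μ _ ⟨t, ht⟩ hμ
    exact hμ.charFun_ne_zero t (charF_eq_charFun μ ▸ ht)
  refine ⟨vanishing, fun m lam x hlam hx hroot hxlam μ hprob hchar => vanishing μ hprob ?_⟩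
  obtain ⟨u, hu⟩ := exists_two_mul_mul_one_sub_cos_eq hlam hx.le (by linarith)
  exact ⟨u, by simp [hchar u, hu, hroot]⟩
end

section
/- For every nonnegative integer m and \lambda > 0, L_m(2\lambda(1-\cos u)) = \gamma_0(\lambda,m)/2 + \sum_{k=1}^m \gamma_k(\lambda,m) \cos(ku) for all real u, where \gamma_k(\lambda,m) = 2(-1)^k \sum_{j=k}^m ((-m)_j (1/2)_j / (\Gamma(1+k+j)\Gamma(1-k+j))) (4\lambda)^j / j!. -/
/-- The Fourier coefficients
`γ_k(λ,m) = 2(-1)^k ∑_{j=k}^m ((-m)_j (1/2)_j / (Γ(1+k+j) Γ(1-k+j))) (4λ)^j / j!`,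
where `(a)_j` is the Pochhammer (rising factorial) symbol. -/
noncomputable def gammaCoeff (lam : ℝ) (m k : ℕ) : ℝ :=
  2 * (-1) ^ k * ∑ j ∈ Finset.Icc k m,
    (∏ i ∈ Finset.range j, (-(m : ℝ) + i)) * (∏ i ∈ Finset.range j, ((1 : ℝ) / 2 + i)) /
      (Real.Gamma (1 + k + j) * Real.Gamma (1 - (k : ℝ) + j)) *
      (4 * lam) ^ j / (Nat.factorial j : ℝ)

open Finset Real

theorem Finset.sum_range_two_mul_add_one {M : Type*} [AddCommMonoid M] (f : ℕ → M) (j : ℕ) :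
    ∑ r ∈ range (2 * j + 1), f r = f j + ∑ k ∈ Icc 1 j, (f (j + k) + f (j - k)) := by
  have hIcc : ∀ g : ℕ → M, ∑ k ∈ Icc 1 j, g k = ∑ k ∈ range j, g (k + 1) := by
    intro g
    rw [← Ico_add_one_right_eq_Icc, sum_Ico_eq_sum_range]
    simp only [Nat.add_sub_cancel, add_comm 1]
  rw [hIcc, sum_add_distrib, show 2 * j + 1 = j + (j + 1) by ring, sum_range_add,
    sum_range_succ', ← sum_range_reflect]
  simp only [add_zero, Nat.sub_sub, add_comm 1]
  abel

theorem two_sub_add_pow_of_mul_eq_one {R : Type*} [CommRing R] {z w : R} (hzw : z * w = 1)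
    (j : ℕ) :
    (2 - (z + w)) ^ j = (2 * j).choose j +
      ∑ k ∈ Icc 1 j, (-1) ^ k * ((2 * j).choose (j + k) : R) * (z ^ k + w ^ k) := by
  have hsq : 2 - (z + w) = -((z - 1) ^ 2 * w) := by linear_combination (z - 2) * hzw
  rw [hsq, neg_pow, mul_pow, ← pow_mul, sub_pow, sum_mul, mul_sum, sum_range_two_mul_add_one]
  simp only [one_pow, mul_one]
  have hsign : ∀ a k n : ℕ, j + a = 2 * n + k → (-1 : R) ^ j * (-1) ^ a = (-1) ^ k := by
    intro a k n h
    rw [← pow_add, h, pow_add, pow_mul, neg_one_sq, one_pow, one_mul]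
  refine congrArg₂ (· + ·) ?_ (sum_congr rfl fun k hk => ?_)
  · calc _ = (-1 : R) ^ j * (-1) ^ (j + 2 * j) * (2 * j).choose j * (z * w) ^ j := by ring
      _ = _ := by rw [hsign (j + 2 * j) 0 (2 * j) (by ring), hzw]; ring
  · obtain ⟨-, hkj⟩ := mem_Icc.mp hk
    have hzk : z ^ (j + k) * w ^ j = z ^ k := by
      rw [pow_add, mul_right_comm, ← mul_pow, hzw, one_pow, one_mul]
    have hwk : z ^ (j - k) * w ^ j = w ^ k := by
      rw [← pow_sub_mul_pow w hkj, ← mul_assoc, ← mul_pow, hzw, one_pow, one_mul]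
    calc _ = (-1 : R) ^ j * (-1) ^ (j + k + 2 * j) * (2 * j).choose (j + k) *
            (z ^ (j + k) * w ^ j) +
          (-1 : R) ^ j * (-1) ^ (j - k + 2 * j) * (2 * j).choose (j - k) *
            (z ^ (j - k) * w ^ j) := by
          ring
      _ = _ := by
        rw [hsign (j + k + 2 * j) k (2 * j) (by ring),
          hsign (j - k + 2 * j) k (2 * j - k) (by omega), hzk, hwk,
          Nat.choose_symm_of_eq_add (show 2 * j = (j - k) + (j + k) by omega)]
        ring

theorem two_sub_two_mul_cos_pow (u : ℝ) (j : ℕ) :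
    (2 - 2 * cos u) ^ j = (2 * j).choose j +
      2 * ∑ k ∈ Icc 1 j, (-1) ^ k * ((2 * j).choose (j + k) : ℝ) * cos (k * u) := by
  set z := Complex.exp (u * Complex.I)
  set w := Complex.exp (-u * Complex.I)
  have hzw : z * w = 1 := by rw [← Complex.exp_add]; simp
  have hcos : ∀ k : ℕ, ((2 * cos (k * u) : ℝ) : ℂ) = z ^ k + w ^ k := by
    intro k
    push_cast
    rw [Complex.two_cos, ← Complex.exp_nat_mul, ← Complex.exp_nat_mul]
    ring_nf
  have hcos_one : ((2 * cos u : ℝ) : ℂ) = z + w := by simpa using hcos 1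
  rw [mul_sum]
  simp_rw [mul_left_comm (2 : ℝ)]
  apply Complex.ofReal_injective
  rw [Complex.ofReal_pow, Complex.ofReal_sub, Complex.ofReal_ofNat, hcos_one,
    two_sub_add_pow_of_mul_eq_one hzw, Complex.ofReal_add, Complex.ofReal_natCast,
    Complex.ofReal_sum]
  refine congrArg _ (sum_congr rfl fun k _ => ?_)
  rw [Complex.ofReal_mul, hcos]
  push_cast
  rfl

noncomputable def laguerreCoeff (m j : ℕ) : ℝ :=
  (-1) ^ j * m.choose j / j.factorial

theorem lag_zero_eq_sum (m : ℕ) (x : ℝ) :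
    lag m 0 x = ∑ j ∈ range (m + 1), laguerreCoeff m j * x ^ j := by
  refine sum_congr rfl fun j hj => ?_
  rw [add_zero, Nat.choose_symm (Nat.lt_succ_iff.mp (mem_range.mp hj)), laguerreCoeff, neg_pow]
  ring

theorem prod_range_neg_natCast_add {R : Type*} [CommRing R] (m j : ℕ) :
    ∏ i ∈ range j, (-(m : R) + i) = (-1) ^ j * m.descFactorial j := by
  simp only [← descPochhammer_eval_eq_descFactorial, descPochhammer_eval_eq_prod_range,
    neg_add_eq_sub, ← neg_sub (m : R), prod_neg, card_range]

theorem prod_range_half_add {K : Type*} [Field K] [CharZero K] (j : ℕ) :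
    ∏ i ∈ range j, ((1 : K) / 2 + i) = (2 * j).factorial / (4 ^ j * j.factorial) := by
  induction j with
  | zero => simp
  | succ n ih =>
    rw [prod_range_succ, ih, show 2 * (n + 1) = 2 * n + 1 + 1 by ring, Nat.factorial_succ,
      Nat.factorial_succ, Nat.factorial_succ]
    push_cast
    field_simp
    ring

theorem gammaCoeff_summand_eq {m k j : ℕ} (hkj : k ≤ j) (lam : ℝ) :
    (∏ i ∈ range j, (-(m : ℝ) + i)) * (∏ i ∈ range j, ((1 : ℝ) / 2 + i)) /
      (Gamma (1 + k + j) * Gamma (1 - (k : ℝ) + j)) * (4 * lam) ^ j / (j.factorial : ℝ) =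
      laguerreCoeff m j * lam ^ j * (2 * j).choose (j + k) := by
  have hΓ₁ : Gamma (1 + k + j) = (j + k).factorial := by
    rw [← Gamma_nat_eq_factorial]; push_cast; ring_nf
  have hΓ₂ : Gamma (1 - (k : ℝ) + j) = (j - k).factorial := by
    rw [← Gamma_nat_eq_factorial]; push_cast [hkj]; ring_nf
  have hchoose : ((2 * j).choose (j + k) : ℝ) * (j + k).factorial * (j - k).factorial =
      (2 * j).factorial := by
    have h := Nat.choose_mul_factorial_mul_factorial (show j + k ≤ 2 * j by omega)
    rw [show 2 * j - (j + k) = j - k by omega] at h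
    exact_mod_cast h
  rw [prod_range_neg_natCast_add, prod_range_half_add, hΓ₁, hΓ₂, ← hchoose, laguerreCoeff,
    Nat.descFactorial_eq_factorial_mul_choose]
  push_cast
  field_simp
  ring

theorem gammaCoeff_eq (lam : ℝ) (m k : ℕ) :
    gammaCoeff lam m k = 2 * (-1) ^ k *
      ∑ j ∈ Icc k m, laguerreCoeff m j * lam ^ j * (2 * j).choose (j + k) :=
  congrArg _ <| sum_congr rfl fun _ hj => gammaCoeff_summand_eq (mem_Icc.mp hj).1 lam

theorem laguerre_fourier_decomposition_general (m : ℕ) (lam : ℝ) (u : ℝ) :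
    lag m 0 (2 * lam * (1 - Real.cos u)) =
      gammaCoeff lam m 0 / 2 +
        ∑ k ∈ Finset.Icc 1 m, gammaCoeff lam m k * Real.cos (k * u) := by
  have hswap : ∀ f : ℕ → ℕ → ℝ, ∑ j ∈ range (m + 1), ∑ k ∈ Icc 1 j, f j k =
      ∑ k ∈ Icc 1 m, ∑ j ∈ Icc k m, f j k :=
    fun f => sum_comm' fun j k => by simp only [mem_range, mem_Icc]; omega
  rw [show 2 * lam * (1 - cos u) = lam * (2 - 2 * cos u) by ring, lag_zero_eq_sum]
  simp only [mul_pow, two_sub_two_mul_cos_pow, mul_add, mul_sum, sum_add_distrib, hswap,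
    gammaCoeff_eq, ← Nat.range_succ_eq_Icc_zero, sum_mul]
  refine congrArg₂ (· + ·) ?_ (sum_congr rfl fun k _ => sum_congr rfl fun j _ => by ring)
  rw [sum_div]
  exact sum_congr rfl fun j _ => by rw [pow_zero, add_zero]; ring

/-- The Fourier (cosine) decomposition
`L_m(2λ(1-cos u)) = γ₀(λ,m)/2 + ∑_{k=1}^m γ_k(λ,m) cos(ku)`. -/
theorem laguerre_fourier_decomposition (m : ℕ) (lam : ℝ) (hlam : 0 < lam) (u : ℝ) :
    lag m 0 (2 * lam * (1 - Real.cos u)) =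
      gammaCoeff lam m 0 / 2 +
        ∑ k ∈ Finset.Icc 1 m, gammaCoeff lam m k * Real.cos (k * u) :=
  laguerre_fourier_decomposition_general m lam u
end
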